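/- arXiv:1505.04707 — 2 statements merged into one kernel-verified Lean document; each statement's English description precedes it below -/
import Mathlib

section
/- Let T > 0, θ > 1, A, B > 0, and let M : [0,T] → (0,∞) be continuous with M(t) ≤ A + B·M(t)^θ for all t ∈ [0,T]. If A < ((θ-1)/θ)·(θB)^(1/(1-θ)) and M(0) ≤ (θB)^(1/(1-θ)), then M(t) ≤ (θ/(θ-1))·A for all t ∈ [0,T]. -/
theorem stmt_1 (T θ A B : ℝ) (hT : 0 < T) (hθ : 1 < θ) (hA : 0 < A) (hB : 0 < B)
    (M : ℝ → ℝ) (hMpos : ∀ t ∈ Set.Icc (0:ℝ) T, 0 < M t)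
    (hMcont : ContinuousOn M (Set.Icc 0 T))
    (hself : ∀ t ∈ Set.Icc (0:ℝ) T, M t ≤ A + B * (M t) ^ θ)
    (hAsmall : A < (θ - 1) / θ * (θ * B) ^ (1 / (1 - θ)))
    (hM0 : M 0 ≤ (θ * B) ^ (1 / (1 - θ))) :
    ∀ t ∈ Set.Icc (0:ℝ) T, M t ≤ θ / (θ - 1) * A := by
  set c := θ / (θ - 1) * A with hc
  set x := (θ * B) ^ (1 / (1 - θ)) with hxdef
  have hθ0 : 0 < θ := lt_trans one_pos hθ
  have hθ1 : 0 < θ - 1 := by linarith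
  have hθB : 0 < θ * B := mul_pos hθ0 hB
  have hxpos : 0 < x := Real.rpow_pos_of_pos hθB _
  have hcx : c < x := by
    have h1 : θ / (θ - 1) * A < θ / (θ - 1) * ((θ - 1) / θ * x) := by
      apply mul_lt_mul_of_pos_left hAsmall (by positivity)
    have h2 : θ / (θ - 1) * ((θ - 1) / θ * x) = x := by
      field_simp
    rw [hc]
    rw [h2] at h1
    exact h1
  have hx1 : x ^ (θ - 1) = (θ * B)⁻¹ := by
    rw [hxdef, ← Real.rpow_mul hθB.le]
    have hne : (1:ℝ) - θ ≠ 0 := by linarith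
    have : 1 / (1 - θ) * (θ - 1) = -1 := by
      field_simp
      ring
    rw [this, Real.rpow_neg_one]
  have key : ∀ y, 0 < y → y ≤ x → y ≤ A + B * y ^ θ → y ≤ c := by
    intro y hy hyx hyself
    have hsplit : y ^ θ = y * y ^ (θ - 1) := by
      have h := Real.rpow_add hy 1 (θ - 1)
      rw [Real.rpow_one] at h
      rw [show (1:ℝ) + (θ - 1) = θ by ring] at h
      exact h
    have hmono : y ^ (θ - 1) ≤ (θ * B)⁻¹ := by
      rw [← hx1]
      exact Real.rpow_le_rpow hy.le hyx hθ1.le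
    have h1 : B * y ^ θ ≤ y / θ := by
      rw [hsplit]
      have : B * (y * y ^ (θ - 1)) ≤ B * (y * (θ * B)⁻¹) := by
        apply mul_le_mul_of_nonneg_left _ hB.le
        exact mul_le_mul_of_nonneg_left hmono hy.le
      calc B * (y * y ^ (θ - 1)) ≤ B * (y * (θ * B)⁻¹) := this
        _ = y / θ := by field_simp
    have h2 : y ≤ A + y / θ := le_trans hyself (by linarith)
    have h3 : y * (θ - 1) ≤ A * θ := by
      have := mul_le_mul_of_nonneg_right h2 hθ0.le
      have hd : y / θ * θ = y := by field_simp
      nlinarith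
    rw [hc, div_mul_eq_mul_div, le_div_iff₀ hθ1]
    nlinarith
  intro t ht
  by_contra hcon
  push_neg at hcon
  have hMt : x < M t := by
    by_contra hle
    push_neg at hle
    exact absurd (key _ (hMpos t ht) hle (hself t ht)) (not_le.mpr hcon)
  have h0T : (0:ℝ) ∈ Set.Icc (0:ℝ) T := ⟨le_refl 0, hT.le⟩
  have hM0c : M 0 ≤ c := key _ (hMpos 0 h0T) hM0 (hself 0 h0T)
  set v := (c + x) / 2 with hv
  have hcv : c < v := by rw [hv]; linarith
  have hvx : v < x := by rw [hv]; linarith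
  have hsub : Set.Icc (0:ℝ) t ⊆ Set.Icc 0 T := Set.Icc_subset_Icc le_rfl ht.2
  have hivt := intermediate_value_Icc ht.1 (hMcont.mono hsub)
  have hvmem : v ∈ Set.Icc (M 0) (M t) := ⟨by linarith, by linarith⟩
  obtain ⟨s, hs, hMs⟩ := hivt hvmem
  have hsT : s ∈ Set.Icc (0:ℝ) T := hsub hs
  have : M s ≤ c := key _ (hMpos s hsT) (by rw [hMs]; linarith) (hself s hsT)
  rw [hMs] at this
  linarith
end

section
/- Let s > 0 and f in the dual space A^{-s}(ℝ^{2n}). Then ‖𝕋(t)f‖_{A^{-s}} ≤ (2+(4πt)²)^s ‖f‖_{A^{-s}}, where 𝕋(t)f(x,k) = f(x-4πkt,k). -/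
open MeasureTheory Real Filter
open scoped ENNReal

noncomputable section

abbrev E (n : ℕ) := EuclideanSpace ℝ (Fin n)

/-- Fourier transform on phase space ℝ^{2n}. -/
def ft2 (n : ℕ) (f : E n × E n → ℂ) (X K : E n) : ℂ :=
  ∫ p : E n × E n,
    Complex.exp (-2 * (π : ℂ) * Complex.I *
      (((inner ℝ p.1 X : ℝ) : ℂ) + ((inner ℝ p.2 K : ℝ) : ℂ))) * f p

/-- Wiener–Sobolev norm `‖f‖_{A^s}` on ℝ^{2n}. -/
def AsNorm2 (n : ℕ) (s : ℝ) (f : E n × E n → ℂ) : ℝ≥0∞ :=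
  ∫⁻ q : E n × E n,
    ENNReal.ofReal ((1 + ‖q.1‖ + ‖q.2‖) ^ s * ‖ft2 n f q.1 q.2‖)

/-- Dual norm `‖f‖_{A^{-s}} = sup { |⟨f,ψ⟩| : ‖ψ‖_{A^s} = 1 }`. -/
def AdualNorm (n : ℕ) (s : ℝ) (f : E n × E n → ℂ) : ℝ≥0∞ :=
  ⨆ ψ : {ψ : E n × E n → ℂ // AsNorm2 n s ψ = 1},
    ENNReal.ofReal (‖∫ p : E n × E n, f p * (starRingEnd ℂ) (ψ.1 p)‖)

/-- The free-transport operator `𝕋(t) : f(x,k) ↦ f(x - 4πkt, k)`. -/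
def transport (n : ℕ) (t : ℝ) (f : E n × E n → ℂ) : E n × E n → ℂ :=
  fun p => f (p.1 - (4 * π * t) • p.2, p.2)

/-! ### Auxiliary material: shear maps on phase space -/

/-- Shear in the second coordinate: `(X, K) ↦ (X, K + c•X)`. -/
def shear2 (n : ℕ) (c : ℝ) : (E n × E n) ≃ᵐ (E n × E n) where
  toFun p := (p.1, p.2 + c • p.1)
  invFun p := (p.1, p.2 - c • p.1)
  left_inv p := by simp
  right_inv p := by simp
  measurable_toFun := measurable_fst.prodMk (measurable_snd.add (measurable_fst.const_smul c))
  measurable_invFun := measurable_fst.prodMk (measurable_snd.sub (measurable_fst.const_smul c))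

/-- Shear in the first coordinate: `(x, k) ↦ (x + c•k, k)`. -/
def shear1 (n : ℕ) (c : ℝ) : (E n × E n) ≃ᵐ (E n × E n) where
  toFun p := (p.1 + c • p.2, p.2)
  invFun p := (p.1 - c • p.2, p.2)
  left_inv p := by simp
  right_inv p := by simp
  measurable_toFun := (measurable_fst.add (measurable_snd.const_smul c)).prodMk measurable_snd
  measurable_invFun := (measurable_fst.sub (measurable_snd.const_smul c)).prodMk measurable_snd

lemma mp_shear2 (n : ℕ) (c : ℝ) : MeasurePreserving (shear2 n c) volume volume := by
  have h : MeasurePreserving (fun p : E n × E n => (p.1, p.2 + c • p.1))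
      (volume.prod volume) (volume.prod volume) :=
    (MeasurePreserving.id volume).skew_product
      (measurable_snd.add (measurable_fst.const_smul c))
      (ae_of_all _ fun X => (measurePreserving_add_right volume (c • X)).map_eq)
  simpa [Measure.volume_eq_prod, shear2] using h

lemma mp_shear1 (n : ℕ) (c : ℝ) : MeasurePreserving (shear1 n c) volume volume := by
  have hsw : MeasurePreserving (Prod.swap : E n × E n → E n × E n) volume volume := by
    rw [Measure.volume_eq_prod]; exact Measure.measurePreserving_swap
  have hcomp := hsw.comp ((mp_shear2 n c).comp hsw)
  have : (Prod.swap ∘ (shear2 n c) ∘ Prod.swap : E n × E n → E n × E n) = shear1 n c := rfl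
  rwa [this] at hcomp

/-! ### The Fourier transform of a transported function -/

lemma ft2_transport (n : ℕ) (t : ℝ) (φ : E n × E n → ℂ) (X K : E n) :
    ft2 n (transport n t φ) X K = ft2 n φ X (K + (4 * π * t) • X) := by
  set c : ℝ := 4 * π * t with hc
  have h := (mp_shear1 n c).integral_comp (shear1 n c).measurableEmbedding
    (fun p : E n × E n =>
      Complex.exp (-2 * (π : ℂ) * Complex.I *
        (((inner ℝ p.1 X : ℝ) : ℂ) + ((inner ℝ p.2 K : ℝ) : ℂ))) * transport n t φ p)
  rw [ft2, ← h]
  show (∫ p : E n × E n, _ ) = _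
  rw [ft2]
  congr 1
  funext p
  have h1 : transport n t φ (shear1 n c p) = φ p := by
    simp [transport, shear1, hc]
  have h2 : ((inner ℝ ((shear1 n c p).1) X : ℝ) : ℂ) + ((inner ℝ ((shear1 n c p).2) K : ℝ) : ℂ)
      = ((inner ℝ p.1 X : ℝ) : ℂ) + ((inner ℝ p.2 (K + c • X) : ℝ) : ℂ) := by
    have e1 : (inner ℝ ((shear1 n c p).1) X : ℝ) = inner ℝ p.1 X + c * inner ℝ p.2 X := by
      simp only [shear1, MeasurableEquiv.coe_mk, Equiv.coe_fn_mk, inner_add_left,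
        real_inner_smul_left]
    have e2 : (inner ℝ p.2 (K + c • X) : ℝ) = inner ℝ p.2 K + c * inner ℝ p.2 X := by
      simp only [inner_add_right, real_inner_smul_right]
    have e3 : ((shear1 n c p).2) = p.2 := rfl
    rw [e1, e3, e2]
    push_cast
    ring
  rw [h1]
  congr 1
  rw [h2]

/-! ### Adjoint relation for the pairing -/

lemma pairing_transport (n : ℕ) (t : ℝ) (f ψ : E n × E n → ℂ) :
    (∫ p : E n × E n, transport n t f p * (starRingEnd ℂ) (ψ p))
      = ∫ p : E n × E n, f p * (starRingEnd ℂ) (transport n (-t) ψ p) := by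
  set c : ℝ := 4 * π * t with hc
  have h := (mp_shear1 n c).integral_comp (shear1 n c).measurableEmbedding
    (fun p : E n × E n => transport n t f p * (starRingEnd ℂ) (ψ p))
  rw [← h]
  congr 1
  funext p
  have h1 : transport n t f (shear1 n c p) = f p := by simp [transport, shear1, hc]
  have h2 : ψ (shear1 n c p) = transport n (-t) ψ p := by
    simp [transport, shear1, hc, sub_neg_eq_add]
  show transport n t f (shear1 n c p) * (starRingEnd ℂ) (ψ (shear1 n c p)) = _
  rw [h1, h2]

/-! ### Elementary inequality -/

lemma norm_shear_ineq {n : ℕ} {s : ℝ} (hs : 0 < s) (c : ℝ) (x k : E n) :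
    (1 + ‖x‖ + ‖k - c • x‖) ^ s ≤ (2 + c ^ 2) ^ s * (1 + ‖x‖ + ‖k‖) ^ s := by
  have hb : (0:ℝ) ≤ 1 + ‖x‖ + ‖k‖ := by positivity
  have h1 : 1 + ‖x‖ + ‖k - c • x‖ ≤ (2 + c ^ 2) * (1 + ‖x‖ + ‖k‖) := by
    have h2 : ‖k - c • x‖ ≤ ‖k‖ + |c| * ‖x‖ := by
      calc ‖k - c • x‖ ≤ ‖k‖ + ‖c • x‖ := norm_sub_le _ _
        _ = ‖k‖ + |c| * ‖x‖ := by rw [norm_smul, Real.norm_eq_abs]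
    have h3 : |c| ≤ 1 + c ^ 2 := by nlinarith [sq_abs c, sq_nonneg (|c| - 1), abs_nonneg c]
    have hx : (0:ℝ) ≤ ‖x‖ := norm_nonneg _
    have hk : (0:ℝ) ≤ ‖k‖ := norm_nonneg _
    nlinarith [abs_nonneg c]
  calc (1 + ‖x‖ + ‖k - c • x‖) ^ s ≤ ((2 + c ^ 2) * (1 + ‖x‖ + ‖k‖)) ^ s :=
        Real.rpow_le_rpow (by positivity) h1 hs.le
    _ = (2 + c ^ 2) ^ s * (1 + ‖x‖ + ‖k‖) ^ s := Real.mul_rpow (by positivity) hb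

/-! ### The `A^s` bound for the transport operator -/

lemma asNorm2_transport_le (n : ℕ) {s : ℝ} (hs : 0 < s) (t : ℝ) (φ : E n × E n → ℂ) :
    AsNorm2 n s (transport n t φ) ≤
      ENNReal.ofReal ((2 + (4 * π * t) ^ 2) ^ s) * AsNorm2 n s φ := by
  set c : ℝ := 4 * π * t with hc
  set G : E n × E n → ℝ≥0∞ := fun q =>
    ENNReal.ofReal ((1 + ‖q.1‖ + ‖q.2‖) ^ s *
      ‖ft2 n φ q.1 (q.2 + c • q.1)‖) with hG
  have step1 : AsNorm2 n s (transport n t φ) = ∫⁻ q : E n × E n, G q := by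
    rw [AsNorm2]
    refine lintegral_congr fun q => ?_
    rw [ft2_transport n t φ q.1 q.2]
  have step2 : (∫⁻ q : E n × E n, G q) = ∫⁻ q : E n × E n, G (shear2 n (-c) q) :=
    ((mp_shear2 n (-c)).lintegral_comp_emb (shear2 n (-c)).measurableEmbedding G).symm
  have step3 : ∀ q : E n × E n, G (shear2 n (-c) q)
      = ENNReal.ofReal ((1 + ‖q.1‖ + ‖q.2 - c • q.1‖) ^ s * ‖ft2 n φ q.1 q.2‖) := by
    intro q
    have e1 : (shear2 n (-c) q).1 = q.1 := rfl
    have e2 : (shear2 n (-c) q).2 = q.2 - c • q.1 := by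
      show q.2 + (-c) • q.1 = q.2 - c • q.1
      rw [neg_smul, ← sub_eq_add_neg]
    rw [hG]
    simp only [e1, e2, sub_add_cancel]
  have step4 : (∫⁻ q : E n × E n, G (shear2 n (-c) q))
      ≤ ENNReal.ofReal ((2 + c ^ 2) ^ s) * AsNorm2 n s φ := by
    rw [AsNorm2, ← lintegral_const_mul' _ _ ENNReal.ofReal_ne_top]
    refine lintegral_mono fun q => ?_
    rw [step3 q]
    have hmono : (1 + ‖q.1‖ + ‖q.2 - c • q.1‖) ^ s * ‖ft2 n φ q.1 q.2‖
        ≤ (2 + c ^ 2) ^ s * ((1 + ‖q.1‖ + ‖q.2‖) ^ s * ‖ft2 n φ q.1 q.2‖) := by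
      rw [← mul_assoc]
      exact mul_le_mul_of_nonneg_right (norm_shear_ineq hs c q.1 q.2)
        (norm_nonneg _)
    calc ENNReal.ofReal ((1 + ‖q.1‖ + ‖q.2 - c • q.1‖) ^ s * ‖ft2 n φ q.1 q.2‖)
        ≤ ENNReal.ofReal ((2 + c ^ 2) ^ s *
            ((1 + ‖q.1‖ + ‖q.2‖) ^ s * ‖ft2 n φ q.1 q.2‖)) :=
          ENNReal.ofReal_le_ofReal hmono
      _ = ENNReal.ofReal ((2 + c ^ 2) ^ s) *
            ENNReal.ofReal ((1 + ‖q.1‖ + ‖q.2‖) ^ s * ‖ft2 n φ q.1 q.2‖) :=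
          ENNReal.ofReal_mul (by positivity)
  rw [step1, step2]
  exact step4

/-! ### Scaling of the `A^s` norm -/

lemma asNorm2_smul (n : ℕ) (s : ℝ) {a : ℝ} (ha : 0 ≤ a) (φ : E n × E n → ℂ) :
    AsNorm2 n s (fun p => (a : ℂ) * φ p) = ENNReal.ofReal a * AsNorm2 n s φ := by
  have hft : ∀ X K : E n, ft2 n (fun p => (a : ℂ) * φ p) X K = (a : ℂ) * ft2 n φ X K := by
    intro X K
    rw [ft2, ft2, ← integral_const_mul]
    congr 1
    funext p
    ring
  rw [AsNorm2, AsNorm2, ← lintegral_const_mul' _ _ ENNReal.ofReal_ne_top]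
  refine lintegral_congr fun q => ?_
  rw [hft q.1 q.2, norm_mul, Complex.norm_of_nonneg ha,
    ← ENNReal.ofReal_mul ha]
  congr 1
  ring

theorem stmt_5 (n : ℕ) (s t : ℝ) (hs : 0 < s) (f : E n × E n → ℂ)
    (hf : AdualNorm n s f ≠ ⊤) :
    AdualNorm n s (transport n t f) ≤
      ENNReal.ofReal ((2 + (4 * π * t) ^ 2) ^ s) * AdualNorm n s f := by
  rw [AdualNorm]
  refine iSup_le ?_
  rintro ⟨ψ, hψ⟩
  simp only
  rw [pairing_transport]
  set φ : E n × E n → ℂ := transport n (-t) ψ with hφdef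
  have hCne : (ENNReal.ofReal ((2 + (4 * π * t) ^ 2) ^ s)) ≠ ⊤ := ENNReal.ofReal_ne_top
  have hup : AsNorm2 n s φ ≤ ENNReal.ofReal ((2 + (4 * π * t) ^ 2) ^ s) := by
    have h := asNorm2_transport_le n hs (-t) ψ
    rw [hψ, mul_one] at h
    have e : (4 * π * (-t)) ^ 2 = (4 * π * t) ^ 2 := by ring
    rwa [e] at h
  have hback : transport n t φ = ψ := by
    funext p
    simp [transport, hφdef, mul_neg, neg_smul, sub_neg_eq_add]
  have hlow : (1 : ℝ≥0∞) ≤ ENNReal.ofReal ((2 + (4 * π * t) ^ 2) ^ s) * AsNorm2 n s φ := by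
    have h := asNorm2_transport_le n hs t φ
    rwa [hback, hψ] at h
  have hne0 : AsNorm2 n s φ ≠ 0 := by
    intro h0
    rw [h0, mul_zero] at hlow
    exact absurd hlow (by simp)
  have hnetop : AsNorm2 n s φ ≠ ⊤ := ne_top_of_le_ne_top hCne hup
  set r : ℝ := (AsNorm2 n s φ).toReal with hr
  have hrpos : 0 < r := ENNReal.toReal_pos hne0 hnetop
  have hofr : ENNReal.ofReal r = AsNorm2 n s φ := ENNReal.ofReal_toReal hnetop
  set ψ' : E n × E n → ℂ := fun p => ((r⁻¹ : ℝ) : ℂ) * φ p with hψ'def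
  have hψ'1 : AsNorm2 n s ψ' = 1 := by
    rw [hψ'def, asNorm2_smul n s (by positivity : (0:ℝ) ≤ r⁻¹) φ, ← hofr,
      ← ENNReal.ofReal_mul (by positivity), inv_mul_cancel₀ hrpos.ne', ENNReal.ofReal_one]
  have hpair : (∫ p : E n × E n, f p * (starRingEnd ℂ) (φ p))
      = (r : ℂ) * ∫ p : E n × E n, f p * (starRingEnd ℂ) (ψ' p) := by
    rw [← integral_const_mul]
    congr 1
    funext p
    rw [hψ'def]
    simp only [map_mul, Complex.conj_ofReal, Complex.ofReal_inv, map_inv₀]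
    have hrne : (r : ℂ) ≠ 0 := by
      exact_mod_cast Complex.ofReal_ne_zero.mpr hrpos.ne'
    field_simp
  calc ENNReal.ofReal (‖∫ p : E n × E n, f p * (starRingEnd ℂ) (φ p)‖)
      = ENNReal.ofReal r *
          ENNReal.ofReal (‖∫ p : E n × E n, f p * (starRingEnd ℂ) (ψ' p)‖) := by
        rw [hpair, norm_mul, Complex.norm_of_nonneg hrpos.le,
          ENNReal.ofReal_mul hrpos.le]
    _ ≤ ENNReal.ofReal r * AdualNorm n s f := by
        refine mul_le_mul_right ?_ _
        exact le_iSup (fun ψ : {ψ : E n × E n → ℂ // AsNorm2 n s ψ = 1} =>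
          ENNReal.ofReal (‖∫ p : E n × E n, f p * (starRingEnd ℂ) (ψ.1 p)‖))
          ⟨ψ', hψ'1⟩
    _ ≤ ENNReal.ofReal ((2 + (4 * π * t) ^ 2) ^ s) * AdualNorm n s f :=
        mul_le_mul_left (hofr ▸ hup) _

end
end
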